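/- arXiv:1203.6610 — 2 statements merged into one kernel-verified Lean document; each statement's English description precedes it below -/
import Mathlib

section
/- In the monopoly setting, if the trivial partition {G} is revenue-maximizing, then p^1 + p^2 ≤ 3·V̄1(B,G). -/
open Finset

variable {B G S : Type*} [Fintype B] [Fintype G] [Fintype S]
variable [DecidableEq B] [DecidableEq G] [DecidableEq S]

/-- `v_b(Ḡ)`: buyer `b`'s total valuation of the variants in `Ḡ`. -/
def vsum (v : B → G → ℕ) (b : B) (Gb : Finset G) : ℕ := ∑ g ∈ Gb, v b g

/-- `V̄1(B̄,Ḡ)`: the largest value among `(v_b(Ḡ))_{b∈B̄}` (`0` if `B̄ = ∅`). -/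
def V1 (v : B → G → ℕ) (Bb : Finset B) (Gb : Finset G) : ℕ :=
  Bb.sup (fun b => vsum v b Gb)

/-- `V̄2(B̄,Ḡ)`: the second-largest value, counted with multiplicity
(`0` if `|B̄| ≤ 1`).  It equals the minimum, over removal of one buyer,
of the maximum over the remaining buyers. -/
def V2 (v : B → G → ℕ) (Bb : Finset B) (Gb : Finset G) : ℕ :=
  if h : Bb.Nonempty then Bb.inf' h (fun b => V1 v (Bb.erase b) Gb) else 0

/-- The set of buyers choosing seller `s` under the assignment `σ`. -/
def buyersOf (σ : B → S) (s : S) : Finset B := univ.filter (fun b => σ b = s)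

/-- Buyer `b`'s utility in the multi-seller game. -/
def ubuyer (v : B → G → ℕ) (τ : S → Finpartition (univ : Finset G)) (σ : B → S) (b : B) : ℚ :=
  (Fintype.card G : ℚ)⁻¹ *
    ∑ Gb ∈ (τ (σ b)).parts, max ((vsum v b Gb : ℚ) - (V2 v (buyersOf σ (σ b)) Gb : ℚ)) 0

/-- Seller `s`'s utility in the multi-seller game. -/
def useller (v : B → G → ℕ) (τ : S → Finpartition (univ : Finset G)) (σ : B → S) (s : S) : ℚ :=
  (Fintype.card G : ℚ)⁻¹ * ∑ Gb ∈ (τ s).parts, (V2 v (buyersOf σ s) Gb : ℚ)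

/-- Social welfare in the multi-seller game. -/
def SWm (v : B → G → ℕ) (τ : S → Finpartition (univ : Finset G)) (σ : B → S) : ℚ :=
  ((Fintype.card S : ℚ) * (Fintype.card G : ℚ))⁻¹ *
    ∑ s : S, ∑ Gb ∈ (τ s).parts, (V1 v (buyersOf σ s) Gb : ℚ)

/-- Social welfare in the single-seller (monopoly) game. -/
def SW1 (v : B → G → ℕ) (π : Finpartition (univ : Finset G)) : ℚ :=
  (Fintype.card G : ℚ)⁻¹ * ∑ Gb ∈ π.parts, (V1 v (univ : Finset B) Gb : ℚ)

/-- The monopolist's revenue. -/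
def rev1 (v : B → G → ℕ) (π : Finpartition (univ : Finset G)) : ℚ :=
  (Fintype.card G : ℚ)⁻¹ * ∑ Gb ∈ π.parts, (V2 v (univ : Finset B) Gb : ℚ)

/-- Buyer `b`'s utility in the monopoly game. -/
def ub1 (v : B → G → ℕ) (π : Finpartition (univ : Finset G)) (b : B) : ℚ :=
  (Fintype.card G : ℚ)⁻¹ *
    ∑ Gb ∈ π.parts, max ((vsum v b Gb : ℚ) - (V2 v (univ : Finset B) Gb : ℚ)) 0

/-- `π` refines `π̂`: every block of `π̂` is a union of blocks of `π`. -/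
def IsRefinement (π πhat : Finpartition (univ : Finset G)) : Prop :=
  ∀ t ∈ πhat.parts, ∃ P ⊆ π.parts, t = P.sup id

/-- `σ` is a (pure) Nash equilibrium of the buyers' subgame induced by `τ`. -/
def IsNash (v : B → G → ℕ) (τ : S → Finpartition (univ : Finset G)) (σ : B → S) : Prop :=
  ∀ (b : B) (s : S), ubuyer v τ (Function.update σ b s) b ≤ ubuyer v τ σ b

/-- `p^i(G)`: the number of goods demanded by at least `i` buyers. -/
def pdem (v : B → G → ℕ) (i : ℕ) : ℕ :=
  (univ.filter (fun g : G => i ≤ ∑ b : B, v b g)).card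

/-- The trivial (indiscrete) partition `{G}`, which discloses nothing. -/
def trivPart (G : Type*) [Fintype G] [DecidableEq G] [Nonempty G] :
    Finpartition (univ : Finset G) :=
  Finpartition.indiscrete Finset.univ_nonempty.ne_empty

/-- `(π, f)` is a pure subgame perfect equilibrium of the two-stage game. -/
def IsSPE (v : B → G → ℕ) (π : S → Finpartition (univ : Finset G))
    (f : (S → Finpartition (univ : Finset G)) → (B → S)) : Prop :=
  (∀ τ, IsNash v τ (f τ)) ∧
  ∀ (s : S) (ρ : Finpartition (univ : Finset G)),
    useller v (Function.update π s ρ) (f (Function.update π s ρ)) s ≤ useller v π (f π) s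

/-!
Sell each good demanded by at least two buyers on its own, and pair up goods demanded by a single
buyer so that the two goods of a pair have different demanders. Every such block has
second-highest value at least one, so as `{G}` maximizes revenue, `p² + k ≤ V̄2(B,G) ≤ V̄1(B,G)`
for the number `k` of pairs. Greedy pairing leaves unpaired only goods with a common demander, at
most `V̄1(B,G)` of them, so `p¹ - p² ≤ V̄1(B,G) + 2k`, and adding the two bounds gives the claim.
-/

theorem Finset.exists_pairwiseDisjoint_pairs {α β : Type*} [DecidableEq α] [DecidableEq β]
    (u : α → β) (M : ℕ) (D : Finset α)
    (hD : ∀ b, #{g ∈ D | u g = b} ≤ M) :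
    ∃ P : Finset (Finset α), (P : Set (Finset α)).PairwiseDisjoint id ∧
      (∀ p ∈ P, p ⊆ D ∧ ∃ g ∈ p, ∃ g' ∈ p, u g ≠ u g') ∧ #D ≤ M + 2 * #P := by
  induction D using Finset.strongInduction with
  | H D ih =>
    by_cases hex : ∃ g ∈ D, ∃ g' ∈ D, u g ≠ u g'
    · obtain ⟨g, hg, g', hg', hu⟩ := hex
      have hne : g ≠ g' := fun h => hu (congrArg u h)
      have hpair : ({g, g'} : Finset α) ⊆ D := insert_subset hg (singleton_subset_iff.2 hg')
      obtain ⟨P, hPdisj, hP, hcard⟩ :=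
        ih (D \ {g, g'}) (sdiff_ssubset hpair (insert_nonempty _ _)) fun b =>
          (card_le_card (filter_subset_filter _ sdiff_subset)).trans (hD b)
      have hnotP : ({g, g'} : Finset α) ∉ P := fun h =>
        (mem_sdiff.1 ((hP _ h).1 (mem_insert_self g _))).2 (mem_insert_self g _)
      refine ⟨insert {g, g'} P, ?_, ?_, ?_⟩
      · rw [coe_insert]
        exact hPdisj.insert fun p hp _ => disjoint_sdiff_self_right.mono_right (hP p hp).1
      · rintro p hp
        obtain rfl | hp := mem_insert.1 hp
        · exact ⟨hpair, g, mem_insert_self _ _, g', by simp, hu⟩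
        · exact ⟨(hP p hp).1.trans sdiff_subset, (hP p hp).2⟩
      · rw [card_sdiff_of_subset hpair, card_pair hne] at hcard
        rw [card_insert_of_notMem hnotP]
        omega
    · push Not at hex
      refine ⟨∅, by simp, by simp, ?_⟩
      obtain rfl | ⟨g₀, hg₀⟩ := D.eq_empty_or_nonempty
      · simp
      · have hclass := hD (u g₀)
        rw [filter_true_of_mem fun g hg => hex g hg g₀ hg₀] at hclass
        simpa using hclass

theorem Finset.card_image_singleton_union {α : Type*} [DecidableEq α] {D : Finset α}
    {P : Finset (Finset α)} (hPD : ∀ p ∈ P, Disjoint p D) :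
    #(D.image singleton ∪ P) = #D + #P := by
  rw [card_union_of_disjoint, card_image_of_injective _ singleton_injective]
  refine disjoint_left.2 fun p hp hpP => ?_
  obtain ⟨g, hg, rfl⟩ := mem_image.1 hp
  exact disjoint_singleton_left.1 (hPD _ hpP) hg

theorem Finset.pairwiseDisjoint_image_singleton_union {α : Type*} [DecidableEq α]
    {D : Finset α} {P : Finset (Finset α)} (hP : (P : Set (Finset α)).PairwiseDisjoint id)
    (hPD : ∀ p ∈ P, Disjoint p D) :
    ((D.image singleton ∪ P : Finset (Finset α)) : Set (Finset α)).PairwiseDisjoint id := by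
  rw [coe_union, Set.pairwiseDisjoint_union]
  refine ⟨?_, hP, ?_⟩
  · rintro _ hp _ hq hpq
    obtain ⟨g, -, rfl⟩ := mem_image.1 hp
    obtain ⟨g', -, rfl⟩ := mem_image.1 hq
    exact disjoint_singleton.2 fun h => hpq (h ▸ rfl)
  · rintro _ hp q hq -
    obtain ⟨g, hg, rfl⟩ := mem_image.1 hp
    exact disjoint_singleton_left.2 fun hgq => disjoint_right.1 (hPD q hq) hg hgq

theorem Finset.exists_ne_of_two_le_sum {ι : Type*} {s : Finset ι} {f : ι → ℕ}
    (hf : ∀ i ∈ s, f i ≤ 1) (h : 2 ≤ ∑ i ∈ s, f i) :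
    ∃ i ∈ s, ∃ j ∈ s, i ≠ j ∧ f i = 1 ∧ f j = 1 := by
  have hsum : ∑ i ∈ s, f i = #{i ∈ s | f i = 1} := by
    rw [card_filter]
    refine sum_congr rfl fun i hi => ?_
    have := hf i hi
    split_ifs <;> omega
  obtain ⟨i, j, hi, hj, hij⟩ := one_lt_card_iff.1 (show 1 < #{i ∈ s | f i = 1} by omega)
  exact ⟨i, (mem_filter.1 hi).1, j, (mem_filter.1 hj).1, hij, (mem_filter.1 hi).2,
    (mem_filter.1 hj).2⟩

theorem Finpartition.exists_erase_empty_subset_parts {α : Type*} [Fintype α] [DecidableEq α]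
    {F : Finset (Finset α)} (hF : (F : Set (Finset α)).PairwiseDisjoint id) :
    ∃ P : Finpartition (univ : Finset α), F.erase ∅ ⊆ P.parts := by
  set R := univ \ F.sup id
  have hdisj : ((insert R F : Finset (Finset α)) : Set (Finset α)).PairwiseDisjoint id := by
    rw [coe_insert]
    exact hF.insert fun q hq _ => disjoint_sdiff_self_left.mono_right (le_sup (f := id) hq)
  have hsup : (insert R F).sup id = univ := by
    rw [sup_insert]
    exact sdiff_union_of_subset (subset_univ (F.sup id))
  exact ⟨Finpartition.ofErase _ hdisj.supIndep hsup, erase_subset_erase _ (subset_insert _ _)⟩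

omit [Fintype B] [Fintype G] [DecidableEq G] in
theorem V2_le_V1 (v : B → G → ℕ) (Bb : Finset B) (Gb : Finset G) :
    V2 v Bb Gb ≤ V1 v Bb Gb := by
  unfold V2
  split_ifs with hBb
  · obtain ⟨b, hb⟩ := hBb
    exact (inf'_le _ hb).trans (sup_mono (erase_subset b Bb))
  · exact Nat.zero_le _

omit [Fintype B] [Fintype G] [DecidableEq G] in
theorem V2_empty (v : B → G → ℕ) (Bb : Finset B) : V2 v Bb ∅ = 0 :=
  Nat.eq_zero_of_le_zero ((V2_le_V1 v Bb ∅).trans (by simp [V1, vsum]))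

omit [Fintype B] [Fintype G] [DecidableEq G] in
theorem le_V2_of_ne (v : B → G → ℕ) {Bb : Finset B} {Gb : Finset G} {b b' : B}
    (hb : b ∈ Bb) (hb' : b' ∈ Bb) (hne : b ≠ b') {k : ℕ} (hk : k ≤ vsum v b Gb)
    (hk' : k ≤ vsum v b' Gb) :
    k ≤ V2 v Bb Gb := by
  rw [V2, dif_pos ⟨b, hb⟩]
  refine le_inf' _ _ fun c _ => ?_
  obtain hcb | rfl := ne_or_eq c b
  · exact le_sup_of_le (mem_erase.2 ⟨hcb.symm, hb⟩) hk
  · exact le_sup_of_le (mem_erase.2 ⟨hne.symm, hb'⟩) hk'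

omit [Fintype B] [Fintype G] [DecidableEq G] in
theorem one_le_V2_of_ne (v : B → G → ℕ) {Bb : Finset B} {Gb : Finset G} {b b' : B} {g g' : G}
    (hb : b ∈ Bb) (hb' : b' ∈ Bb) (hne : b ≠ b') (hg : g ∈ Gb) (hg' : g' ∈ Gb)
    (hvg : 1 ≤ v b g) (hvg' : 1 ≤ v b' g') : 1 ≤ V2 v Bb Gb :=
  le_V2_of_ne v hb hb' hne (hvg.trans (single_le_sum (fun _ _ => Nat.zero_le _) hg))
    (hvg'.trans (single_le_sum (fun _ _ => Nat.zero_le _) hg'))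

omit [Fintype B] [Fintype G] [DecidableEq B] [DecidableEq G] in
theorem card_le_V1_of_one_le (v : B → G → ℕ) {Bb : Finset B} {Gb D : Finset G} {b : B}
    (hb : b ∈ Bb) (hD : D ⊆ Gb) (hvD : ∀ g ∈ D, 1 ≤ v b g) : #D ≤ V1 v Bb Gb :=
  calc #D ≤ vsum v b D := by simpa [vsum] using card_nsmul_le_sum D (v b) 1 hvD
    _ ≤ vsum v b Gb := sum_le_sum_of_subset hD
    _ ≤ V1 v Bb Gb := le_sup (f := fun b => vsum v b Gb) hb

omit [DecidableEq B] [DecidableEq G] in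
theorem pdem_one (v : B → G → ℕ) : pdem v 1 = #{g | ∑ b, v b g = 1} + pdem v 2 := by
  rw [pdem, pdem, ← card_filter_add_card_filter_not (s := {g | 1 ≤ ∑ b, v b g})
    (fun g => ∑ b, v b g = 1), filter_filter, filter_filter]
  congr 2 <;> ext g <;> simp only [mem_filter, mem_univ, true_and] <;> grind

omit [Fintype G] [DecidableEq G] in
theorem one_le_V2_singleton (v : B → G → ℕ) (hv : ∀ b g, v b g ≤ 1) {g : G}
    (hg : 2 ≤ ∑ b, v b g) : 1 ≤ V2 v univ {g} := by
  obtain ⟨b, -, b', -, hne, hb, hb'⟩ := exists_ne_of_two_le_sum (fun b _ => hv b g) hg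
  exact one_le_V2_of_ne v (mem_univ b) (mem_univ b') hne (mem_singleton_self g)
    (mem_singleton_self g) hb.ge hb'.ge

omit [Fintype G] [DecidableEq B] [DecidableEq G] in
theorem exists_demander_of_sum_eq_one (v : B → G → ℕ) {g : G} (hg : ∑ b, v b g = 1) :
    ∃ b, 1 ≤ v b g := by
  obtain ⟨b, -, hb⟩ := exists_ne_zero_of_sum_ne_zero (hg ▸ one_ne_zero : ∑ b, v b g ≠ 0)
  exact ⟨b, Nat.one_le_iff_ne_zero.2 hb⟩

section Revenue

variable [Nonempty G]

theorem sum_V2_parts_le_of_forall_rev1_le (v : B → G → ℕ)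
    (htriv : ∀ π' : Finpartition (univ : Finset G), rev1 v π' ≤ rev1 v (trivPart G))
    (π : Finpartition (univ : Finset G)) :
    ∑ p ∈ π.parts, V2 v univ p ≤ V2 v univ univ := by
  have h := htriv π
  rw [rev1, rev1, show (trivPart G).parts = {univ} from rfl, sum_singleton,
    mul_le_mul_iff_of_pos_left (by positivity)] at h
  exact_mod_cast h

theorem card_le_V2_of_forall_rev1_le (v : B → G → ℕ)
    (htriv : ∀ π' : Finpartition (univ : Finset G), rev1 v π' ≤ rev1 v (trivPart G))
    {F : Finset (Finset G)} (hF : (F : Set (Finset G)).PairwiseDisjoint id)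
    (hF1 : ∀ p ∈ F, 1 ≤ V2 v univ p) : #F ≤ V2 v univ univ := by
  obtain ⟨π, hπ⟩ := Finpartition.exists_erase_empty_subset_parts hF
  calc #F ≤ ∑ p ∈ F, V2 v univ p := by simpa using card_nsmul_le_sum F _ 1 hF1
    _ = ∑ p ∈ F.erase ∅, V2 v univ p := (sum_erase F (V2_empty v univ)).symm
    _ ≤ ∑ p ∈ π.parts, V2 v univ p := sum_le_sum_of_subset hπ
    _ ≤ V2 v univ univ := sum_V2_parts_le_of_forall_rev1_le v htriv π

end Revenue

theorem exists_pairing_of_sum_eq_one [Nonempty B] (v : B → G → ℕ) :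
    ∃ P : Finset (Finset G), (P : Set (Finset G)).PairwiseDisjoint id ∧
      (∀ p ∈ P, p ⊆ ({g | ∑ b, v b g = 1} : Finset G) ∧ 1 ≤ V2 v univ p) ∧
      #{g | ∑ b, v b g = 1} ≤ V1 v univ univ + 2 * #P := by
  choose! u hu using fun g (hg : g ∈ ({g | ∑ b, v b g = 1} : Finset G)) =>
    exists_demander_of_sum_eq_one v (mem_filter.1 hg).2
  obtain ⟨P, hPdisj, hP, hcard⟩ := exists_pairwiseDisjoint_pairs u _ _ fun b =>
    card_le_V1_of_one_le v (mem_univ b) (subset_univ _) fun g hg =>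
      (mem_filter.1 hg).2 ▸ hu g (mem_filter.1 hg).1
  refine ⟨P, hPdisj, fun p hp => ⟨(hP p hp).1, ?_⟩, hcard⟩
  obtain ⟨hpD, g, hg, g', hg', hne⟩ := hP p hp
  exact one_le_V2_of_ne v (mem_univ _) (mem_univ _) hne hg hg' (hu g (hpD hg)) (hu g' (hpD hg'))

/-- if the trivial partition is revenue-maximizing then
`p¹ + p² ≤ 3·V̄1(B,G)`. -/
theorem trivial_revmax_p1_p2_le [Nonempty B] [Nonempty G]
    (v : B → G → ℕ) (hv : ∀ b g, v b g ≤ 1)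
    (htriv : ∀ π' : Finpartition (univ : Finset G), rev1 v π' ≤ rev1 v (trivPart G)) :
    pdem v 1 + pdem v 2 ≤ 3 * V1 v (univ : Finset B) (univ : Finset G) := by
  set D2 : Finset G := {g | 2 ≤ ∑ b, v b g}
  obtain ⟨P, hPdisj, hP, hD1⟩ := exists_pairing_of_sum_eq_one v
  have hPD2 : ∀ p ∈ P, Disjoint p D2 := fun p hp => disjoint_left.2 fun g hg hg2 => by
    have h1 := (mem_filter.1 ((hP p hp).1 hg)).2
    have h2 := (mem_filter.1 hg2).2
    omega
  have hblocks := card_le_V2_of_forall_rev1_le v htriv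
    (pairwiseDisjoint_image_singleton_union hPdisj hPD2) (by
      simp only [mem_union, mem_image]
      rintro _ (⟨g, hg, rfl⟩ | hp)
      exacts [one_le_V2_singleton v hv (mem_filter.1 hg).2, (hP _ hp).2])
  rw [card_image_singleton_union hPD2] at hblocks
  have hV2 := V2_le_V1 v univ univ
  rw [pdem_one]
  change _ + #D2 + #D2 ≤ _
  omega
end

section
/- The factor 1 + 1/|S| is tight: for every integer k ≥ 2 there exist a buyer set B with |B| = k+1, a good set G with |G| = 2, binary valuations v, a revenue-maximizing single-seller partition π̂, and, in the game with a seller set S of size k, a pure subgame perfect equilibrium (π, f) such that k·SW(π, f(π)) = (k+1)·SW(π̂) and SW(π̂) = 1/2. -/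
/-!
Buyers `0, …, k-1` want only good `0`, the last buyer only good `1`. Hiding everything, the
monopolist sells the bundle at price `1` (all `k + 1 ≥ 2` buyers value it `1`), and no partition
earns more, since after removing the last buyer every remaining valuation is that of buyer `0`;
this gives revenue and welfare `1 / 2`.

With `k` sellers who all disclose fully, send buyer `i` to seller `i` and the last buyer to a
disclosing seller. Nobody has a rival for the good she wants, so every buyer gets her whole value
`1 / 2` at price `0` and no seller earns anything. A deviating seller still leaves another
disclosing seller (`k ≥ 2`) to host the last buyer, so it still earns `0`; and when nobody
discloses, a buyer who switches sellers meets a rival valuing the bundle as much as she does.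
Every seller sells good `0` to a buyer wanting it and the host also sells good `1`, so the
welfare is `(k + 1) / (2k)`.
-/

open Finset

variable {B G S : Type*} [Fintype B] [Fintype G] [Fintype S]
variable [DecidableEq B] [DecidableEq G] [DecidableEq S]

theorem Finpartition.sum_sum_parts {α M : Type*} [AddCommMonoid M] [DecidableEq α]
    {s : Finset α} (P : Finpartition s) (f : α → M) :
    ∑ t ∈ P.parts, ∑ a ∈ t, f a = ∑ a ∈ s, f a := by
  conv_rhs => rw [← P.biUnion_parts]
  exact (sum_biUnion P.supIndep.pairwiseDisjoint).symm

section

variable {B G S : Type*}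

@[simp]
lemma mem_buyersOf [Fintype B] [DecidableEq S] {σ : B → S} {s : S} {b : B} :
    b ∈ buyersOf σ s ↔ σ b = s := by
  simp [buyersOf]

lemma vsum_singleton (v : B → G → ℕ) (b : B) (g : G) : vsum v b {g} = v b g :=
  sum_singleton _ _

lemma V1_singleton (v : B → G → ℕ) (a : B) (Gb : Finset G) : V1 v {a} Gb = vsum v a Gb :=
  sup_singleton

variable [DecidableEq B]

lemma V1_pair (v : B → G → ℕ) (a c : B) (Gb : Finset G) :
    V1 v {a, c} Gb = max (vsum v a Gb) (vsum v c Gb) := by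
  simp [V1]

lemma V2_le_V1_erase (v : B → G → ℕ) {Bb : Finset B} {b : B} (hb : b ∈ Bb) (Gb : Finset G) :
    V2 v Bb Gb ≤ V1 v (Bb.erase b) Gb := by
  rw [V2, dif_pos ⟨b, hb⟩]
  exact inf'_le _ hb

lemma min_le_V2 (v : B → G → ℕ) {Bb : Finset B} {a c : B} (ha : a ∈ Bb) (hc : c ∈ Bb)
    (hac : a ≠ c) (Gb : Finset G) : min (vsum v a Gb) (vsum v c Gb) ≤ V2 v Bb Gb := by
  rw [V2, dif_pos ⟨a, ha⟩]
  refine le_inf' _ _ fun b _ => ?_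
  by_cases hba : b = a
  · subst hba
    exact (min_le_right _ _).trans (le_sup (f := fun b => vsum v b Gb) (mem_erase.2 ⟨hac.symm, hc⟩))
  · exact (min_le_left _ _).trans (le_sup (f := fun b => vsum v b Gb) (mem_erase.2 ⟨Ne.symm hba, ha⟩))

lemma V2_singleton (v : B → G → ℕ) (a : B) (Gb : Finset G) : V2 v {a} Gb = 0 := by
  simpa [V1] using V2_le_V1_erase v (mem_singleton_self a) Gb

lemma V2_pair (v : B → G → ℕ) {a c : B} (hac : a ≠ c) (Gb : Finset G) :
    V2 v {a, c} Gb = min (vsum v a Gb) (vsum v c Gb) := by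
  have hca : ({a, c} : Finset B).erase c = {a} := by
    rw [erase_insert_of_ne hac, erase_singleton, insert_empty]
  have hac' : ({a, c} : Finset B).erase a = {c} := erase_insert (by simpa using hac)
  refine le_antisymm (le_min ?_ ?_) (min_le_V2 v (by simp) (by simp) hac Gb)
  · simpa [hca, V1] using V2_le_V1_erase v (by simp : c ∈ ({a, c} : Finset B)) Gb
  · simpa [hac', V1] using V2_le_V1_erase v (by simp : a ∈ ({a, c} : Finset B)) Gb

end

section

variable {B G S : Type*} [Fintype G] [DecidableEq G] (v : B → G → ℕ)

lemma sum_vsum_parts (P : Finpartition (univ : Finset G)) (b : B) :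
    ∑ Gb ∈ P.parts, (vsum v b Gb : ℚ) = vsum v b univ := by
  simp only [vsum, Nat.cast_sum]
  exact P.sum_sum_parts _

variable [Fintype B] [DecidableEq B]

lemma rev1_le (π : Finpartition (univ : Finset G)) (b₀ b₁ : B)
    (hdom : ∀ b, b ≠ b₀ → ∀ g, v b g ≤ v b₁ g) :
    rev1 v π ≤ (Fintype.card G : ℚ)⁻¹ * vsum v b₁ univ := by
  rw [rev1, ← sum_vsum_parts v π b₁]
  gcongr with Gb
  exact_mod_cast (V2_le_V1_erase v (mem_univ b₀) Gb).trans
    (Finset.sup_le fun b hb => sum_le_sum fun g _ => hdom b (ne_of_mem_erase hb) g)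

variable [DecidableEq S]
variable (τ : S → Finpartition (univ : Finset G)) (σ : B → S)

lemma ubuyer_nonneg (b : B) : 0 ≤ ubuyer v τ σ b :=
  mul_nonneg (by positivity) (sum_nonneg fun _ _ => le_max_right _ _)

lemma ubuyer_le (b : B) : ubuyer v τ σ b ≤ (Fintype.card G : ℚ)⁻¹ * vsum v b univ := by
  rw [ubuyer, ← sum_vsum_parts v (τ (σ b)) b]
  gcongr with Gb
  exact max_le (sub_le_self _ (Nat.cast_nonneg _)) (Nat.cast_nonneg _)

lemma ubuyer_eq_of_V2_eq_zero (b : B)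
    (h : ∀ Gb ∈ (τ (σ b)).parts, V2 v (buyersOf σ (σ b)) Gb = 0) :
    ubuyer v τ σ b = (Fintype.card G : ℚ)⁻¹ * vsum v b univ := by
  rw [ubuyer, ← sum_vsum_parts v (τ (σ b)) b]
  congr 1
  refine sum_congr rfl fun Gb hGb => ?_
  simp [h Gb hGb]

lemma ubuyer_eq_zero_of_dominated {b c : B} (hcb : c ≠ b) (hc : σ c = σ b)
    (hdom : ∀ Gb ∈ (τ (σ b)).parts, vsum v b Gb ≤ vsum v c Gb) : ubuyer v τ σ b = 0 := by
  rw [ubuyer, sum_eq_zero, mul_zero]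
  intro Gb hGb
  have hV2 : vsum v b Gb ≤ V2 v (buyersOf σ (σ b)) Gb := by
    simpa [hdom Gb hGb] using
      min_le_V2 v (by simp : b ∈ _) (by simp [hc] : c ∈ _) hcb.symm Gb
  simpa using (Nat.cast_le (α := ℚ)).2 hV2

lemma useller_eq_zero (s : S) (h : ∀ Gb ∈ (τ s).parts, V2 v (buyersOf σ s) Gb = 0) :
    useller v τ σ s = 0 := by
  rw [useller, sum_eq_zero fun Gb hGb => by simp [h Gb hGb], mul_zero]

end

namespace CompetitionGainTight

lemma finpartition_fin_two_eq_bot_or_trivPart (π : Finpartition (univ : Finset (Fin 2))) :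
    π = ⊥ ∨ π = trivPart (Fin 2) := by
  revert π
  decide

/-- Buyer `Fin.castSucc i` wants only good `0`; the last buyer wants only good `1`. -/
def val (k : ℕ) (b : Fin (k + 1)) (g : Fin 2) : ℕ :=
  if (b = Fin.last k ↔ g = 1) then 1 else 0

def assign {k : ℕ} (t : Fin k) : Fin (k + 1) → Fin k :=
  Fin.snoc (α := fun _ => Fin k) id t

noncomputable def host {k : ℕ} (s₀ : Fin k) (τ : Fin k → Finpartition (univ : Finset (Fin 2))) :
    Fin k :=
  if h : ∃ s, τ s = ⊥ then h.choose else s₀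

variable {k : ℕ}

lemma val_le_one (b : Fin (k + 1)) (g : Fin 2) : val k b g ≤ 1 := by
  unfold val
  split_ifs <;> omega

lemma vsum_val_univ (b : Fin (k + 1)) : vsum (val k) b univ = 1 := by
  by_cases hb : b = Fin.last k <;> simp [vsum, val, Fin.sum_univ_two, hb]

@[simp]
lemma assign_castSucc (t i : Fin k) : assign t i.castSucc = i := Fin.snoc_castSucc ..

@[simp]
lemma assign_last (t : Fin k) : assign t (Fin.last k) = t := Fin.snoc_last ..

lemma buyersOf_assign (t s : Fin k) :
    buyersOf (assign t) s = if t = s then {s.castSucc, Fin.last k} else {s.castSucc} := by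
  ext b
  induction b using Fin.lastCases with
  | last => split_ifs <;> simp [*, (Fin.castSucc_ne_last s).symm]
  | cast i => split_ifs <;> simp [Fin.castSucc_ne_last]

lemma V2_assign_eq_zero (τ : Fin k → Finpartition (univ : Finset (Fin 2))) {t : Fin k}
    (ht : τ t = ⊥) (s : Fin k) : ∀ Gb ∈ (τ s).parts, V2 (val k) (buyersOf (assign t) s) Gb = 0 := by
  intro Gb hGb
  rw [buyersOf_assign]
  split_ifs with hts
  · subst hts
    rw [ht, Finpartition.parts_bot] at hGb
    obtain ⟨g, -, rfl⟩ := mem_map.1 hGb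
    rw [V2_pair _ (Fin.castSucc_ne_last t)]
    simp [vsum_singleton, val, Fin.castSucc_ne_last, or_not]
  · exact V2_singleton _ _ _

lemma host_eq_bot {s₀ : Fin k} {τ : Fin k → Finpartition (univ : Finset (Fin 2))}
    (h : ∃ s, τ s = ⊥) : τ (host s₀ τ) = ⊥ := by
  rw [host, dif_pos h]
  exact h.choose_spec

lemma isNash_assign_host (s₀ : Fin k) (τ : Fin k → Finpartition (univ : Finset (Fin 2))) :
    IsNash (val k) τ (assign (host s₀ τ)) := by
  intro b s
  set σ := assign (host s₀ τ)
  by_cases hdisc : ∃ s, τ s = ⊥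
  · -- every buyer already gets her whole value `1 / 2`
    have hmax := ubuyer_le (val k) τ (Function.update σ b s) b
    rwa [ubuyer_eq_of_V2_eq_zero (val k) τ σ b
      (V2_assign_eq_zero τ (host_eq_bot hdisc) (σ b))]
  · -- a deviating buyer meets the resident buyer `s.castSucc`, who values the bundle equally
    by_cases hs : s = σ b
    · rw [hs, Function.update_eq_self]
    have hres : s.castSucc ≠ b := by
      rintro rfl
      exact hs (assign_castSucc _ _).symm
    have htriv : τ s = trivPart (Fin 2) :=
      (finpartition_fin_two_eq_bot_or_trivPart (τ s)).resolve_left (not_exists.1 hdisc s)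
    rw [ubuyer_eq_zero_of_dominated (val k) τ _ hres (by simp [σ, Function.update_of_ne hres])]
    · exact ubuyer_nonneg ..
    · simp [htriv, trivPart, vsum_val_univ]

lemma useller_assign_host_eq_zero (s₀ : Fin k) (τ : Fin k → Finpartition (univ : Finset (Fin 2)))
    (h : ∃ s, τ s = ⊥) (s : Fin k) : useller (val k) τ (assign (host s₀ τ)) s = 0 :=
  useller_eq_zero _ _ _ s (V2_assign_eq_zero τ (host_eq_bot h) s)

lemma isSPE_bot_assign_host (s₀ : Fin k) (hk : 2 ≤ k) :
    IsSPE (val k) (fun _ => ⊥) fun τ => assign (host s₀ τ) := by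
  refine ⟨isNash_assign_host s₀, fun s ρ => ?_⟩
  have : Nontrivial (Fin k) := Fin.nontrivial_iff_two_le.2 hk
  obtain ⟨s', hs'⟩ := exists_ne s
  rw [useller_assign_host_eq_zero s₀ _ ⟨s', by simp [hs']⟩ s,
    useller_assign_host_eq_zero s₀ _ ⟨s, rfl⟩ s]

lemma sum_V1_assign (t s : Fin k) :
    ∑ Gb ∈ (⊥ : Finpartition (univ : Finset (Fin 2))).parts,
      (V1 (val k) (buyersOf (assign t) s) Gb : ℚ) = 1 + if t = s then 1 else 0 := by
  rw [Finpartition.parts_bot, sum_map, Fin.sum_univ_two, buyersOf_assign]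
  split_ifs <;> simp [V1_pair, V1_singleton, vsum_singleton, val, Fin.castSucc_ne_last]

lemma SWm_bot_assign (t : Fin k) :
    2 * k * SWm (val k) (fun _ => ⊥) (assign t) = k + 1 := by
  have hk : (k : ℚ) ≠ 0 := by exact_mod_cast (Fin.pos t).ne'
  rw [SWm, sum_congr rfl fun s _ => sum_V1_assign t s]
  simp [sum_add_distrib]
  field_simp

lemma SW1_trivPart : SW1 (val k) (trivPart (Fin 2)) = 1 / 2 := by
  simp [SW1, trivPart, V1, vsum_val_univ, sup_const univ_nonempty]

lemma rev1_le_half (s₀ : Fin k) (π : Finpartition (univ : Finset (Fin 2))) :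
    rev1 (val k) π ≤ 1 / 2 := by
  refine (rev1_le (val k) π (Fin.last k) s₀.castSucc fun b hb g => ?_).trans_eq ?_
  · simp [val, hb, Fin.castSucc_ne_last]
  · simp [vsum_val_univ]

lemma half_le_rev1_trivPart (s₀ : Fin k) : 1 / 2 ≤ rev1 (val k) (trivPart (Fin 2)) := by
  have h := min_le_V2 (val k) (mem_univ s₀.castSucc) (mem_univ (Fin.last k))
    (Fin.castSucc_ne_last s₀) univ
  simp only [vsum_val_univ, min_self] at h
  simpa [rev1, trivPart] using h

end CompetitionGainTight

open CompetitionGainTight in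
/-- the factor `1 + 1/|S|` is tight. -/
theorem competition_gain_tight (k : ℕ) (hk : 2 ≤ k) :
    ∃ v : Fin (k + 1) → Fin 2 → ℕ,
      (∀ b g, v b g ≤ 1) ∧
      ∃ πhat : Finpartition (univ : Finset (Fin 2)),
        (∀ π' : Finpartition (univ : Finset (Fin 2)), rev1 v π' ≤ rev1 v πhat) ∧
        ∃ (π : Fin k → Finpartition (univ : Finset (Fin 2)))
          (f : (Fin k → Finpartition (univ : Finset (Fin 2))) → (Fin (k + 1) → Fin k)),
          IsSPE v π f ∧
          (k : ℚ) * SWm v π (f π) = ((k : ℚ) + 1) * SW1 v πhat ∧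
          SW1 v πhat = 1 / 2 := by
  let s₀ : Fin k := ⟨0, by omega⟩
  refine ⟨val k, val_le_one, trivPart (Fin 2),
    fun π' => (rev1_le_half s₀ π').trans (half_le_rev1_trivPart s₀),
    fun _ => ⊥, fun τ => assign (host s₀ τ), isSPE_bot_assign_host s₀ hk, ?_, SW1_trivPart⟩
  rw [SW1_trivPart]
  linear_combination SWm_bot_assign (host s₀ fun _ => ⊥) / 2
end
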